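/- arXiv:1203.5762 — 2 statements merged into one kernel-verified Lean document; each statement's English description precedes it below -/
import Mathlib

section
/- (Theorem 1, diversity-order form.) Let K ≥ 0 and define the Rician density on ℂ by f_K(h) = ((K+1)/π) · exp(−(K+1)·|h − √(K/(K+1))|²), and let Q(x) = ∫_x^∞ (1/√(2π)) · exp(−u²/2) du be the Gaussian tail function. Let Δa, Δb ∈ ℂ be nonzero and let δ > 0. For ρ > 0 define P(ρ) = ∫∫_{{(h_A, h_B) ∈ ℂ² : h_A ≠ 0 and |h_B/h_A + Δa/Δb| ≥ δ}} Q(√ρ · |h_A·Δa + h_B·Δb| / √2) · f_K(h_A) · f_K(h_B) dh_A dh_B. Then there exists a constant C > 0 (depending on K, Δa, Δb, δ) such that P(ρ) ≤ C/ρ² for all ρ ≥ 1. -/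
open MeasureTheory Set

/-- The Rician density with Rician factor `K` on `ℂ`:
`f_K(h) = ((K+1)/π) exp(−(K+1)|h − √(K/(K+1))|²)`. -/
noncomputable def ricianDensity (K : ℝ) (h : ℂ) : ℝ :=
  ((K + 1) / Real.pi) *
    Real.exp (-(K + 1) * ‖h - (Real.sqrt (K / (K + 1)) : ℂ)‖ ^ 2)

/-- The Gaussian tail function `Q(x) = ∫_x^∞ (1/√(2π)) exp(−u²/2) du`. -/
noncomputable def gaussianQ (x : ℝ) : ℝ :=
  ∫ u in Set.Ioi x, (1 / Real.sqrt (2 * Real.pi)) * Real.exp (-u ^ 2 / 2)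

/-! Away from the singular fade state `s = -Δa/Δb`, i.e. when `|h_B/h_A - s| ≥ δ`, the received
distance `|h_A Δa + h_B Δb| = |Δb| |h_B - s h_A|` controls both `|h_B - s h_A|` and `δ |h_A|`.
Combined with `Q(x) ≤ 2 exp(-x²/4)` and the bound `f_K ≤ (K+1)/π`, the integrand is dominated by
`exp(-ρcδ²|h_A|²) exp(-ρc|h_B - s h_A|²)` with `c = |Δb|²/16`. The shear `h_B ↦ h_B - s h_A`
preserves Lebesgue measure on `ℂ²`, so this dominating function integrates to
`(π/(ρcδ²)) (π/(ρc))`, which is of order `ρ⁻²`. -/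

open Real

lemma gaussianQ_nonneg (x : ℝ) : 0 ≤ gaussianQ x :=
  integral_nonneg fun _ => by positivity

lemma gaussianQ_le_two_mul_exp {x : ℝ} (hx : 0 ≤ x) : gaussianQ x ≤ 2 * exp (-x ^ 2 / 4) := by
  set c := 1 / √(2 * π)
  have hint : Integrable fun u : ℝ => exp (-(1 / 4) * u ^ 2) :=
    integrable_exp_neg_mul_sq (by norm_num)
  have hdom : Integrable fun u : ℝ => c * (exp (-x ^ 2 / 4) * exp (-(1 / 4) * u ^ 2)) :=
    (hint.const_mul _).const_mul _
  -- on `u > x ≥ 0` we have `u² ≥ x²`, so half of the exponent `-u²/2` can be traded for `-x²/4`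
  have htail : gaussianQ x ≤ ∫ u in Ioi x, c * (exp (-x ^ 2 / 4) * exp (-(1 / 4) * u ^ 2)) := by
    refine setIntegral_mono_on ?_ hdom.integrableOn measurableSet_Ioi fun u (hu : x < u) => ?_
    · simp_rw [div_eq_mul_inv (-_ ^ 2) (2 : ℝ), mul_comm _ (2 : ℝ)⁻¹, ← neg_mul_comm]
      exact ((integrable_exp_neg_mul_sq (by norm_num)).const_mul _).integrableOn
    · rw [← exp_add]
      gcongr
      nlinarith
  have hline : ∫ u, c * (exp (-x ^ 2 / 4) * exp (-(1 / 4) * u ^ 2))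
      = c * √(π / (1 / 4)) * exp (-x ^ 2 / 4) := by
    simp_rw [integral_const_mul, integral_gaussian]
    ring
  have hconst : c * √(π / (1 / 4)) ≤ 2 := by
    rw [div_mul_eq_mul_div, one_mul, div_le_iff₀ (by positivity),
      show π / (1 / 4) = 2 * (2 * π) by ring, sqrt_mul zero_le_two]
    gcongr
    rw [sqrt_le_left zero_le_two]
    norm_num
  calc gaussianQ x ≤ ∫ u, c * (exp (-x ^ 2 / 4) * exp (-(1 / 4) * u ^ 2)) :=
        htail.trans (setIntegral_le_integral hdom (.of_forall fun _ => by positivity))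
    _ ≤ 2 * exp (-x ^ 2 / 4) := by rw [hline]; gcongr

section Rician

variable {K : ℝ} (hK : 0 ≤ K + 1)
include hK

lemma ricianDensity_nonneg (h : ℂ) : 0 ≤ ricianDensity K h := by
  unfold ricianDensity
  positivity

lemma ricianDensity_le (h : ℂ) : ricianDensity K h ≤ (K + 1) / π := by
  refine mul_le_of_le_one_right (by positivity) (exp_le_one_iff.mpr ?_)
  nlinarith [sq_nonneg ‖h - (√(K / (K + 1)) : ℂ)‖]

end Rician

section SkewProduct

variable {α G : Type*} [MeasurableSpace α] [MeasurableSpace G] [AddGroup G] [MeasurableAdd₂ G]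
  {μ : Measure α} {ν : Measure G} [SFinite μ] [SFinite ν] [ν.IsAddRightInvariant]
  {φ : α → G}

lemma measurePreserving_prod_add_comp_fst (hφ : Measurable φ) :
    MeasurePreserving (fun p : α × G => (p.1, p.2 + φ p.1)) (μ.prod ν) (μ.prod ν) :=
  (MeasurePreserving.id μ).skew_product (measurable_snd.add (hφ.comp measurable_fst))
    (.of_forall fun x => map_add_right_eq_self ν (φ x))

variable {f : α → ℝ} {g : G → ℝ}

lemma MeasureTheory.Integrable.mul_prod_add_comp_fst (hf : Integrable f μ) (hg : Integrable g ν)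
    (hφ : Measurable φ) :
    Integrable (fun p : α × G => f p.1 * g (p.2 + φ p.1)) (μ.prod ν) :=
  (measurePreserving_prod_add_comp_fst hφ).integrable_comp_of_integrable (hf.mul_prod hg)

lemma integral_mul_prod_add_comp_fst (hf : Integrable f μ) (hg : Integrable g ν)
    (hφ : Measurable φ) :
    ∫ p, f p.1 * g (p.2 + φ p.1) ∂(μ.prod ν) = (∫ x, f x ∂μ) * ∫ y, g y ∂ν := by
  rw [integral_prod _ (hf.mul_prod_add_comp_fst hg hφ)]
  simp only [integral_const_mul, integral_add_right_eq_self, integral_mul_const]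

end SkewProduct

lemma integral_exp_neg_mul_norm_sq_complex {b : ℝ} (hb : 0 < b) :
    ∫ v : ℂ, exp (-b * ‖v‖ ^ 2) = π / b := by
  rw [GaussianFourier.integral_rexp_neg_mul_sq_norm hb]
  norm_num [Complex.finrank_real_complex]

lemma integrable_exp_neg_mul_norm_sq_complex {b : ℝ} (hb : 0 < b) :
    Integrable fun v : ℂ => exp (-b * ‖v‖ ^ 2) :=
  .of_integral_ne_zero <| by rw [integral_exp_neg_mul_norm_sq_complex hb]; positivity

noncomputable def shearGaussian (a b : ℝ) (s : ℂ) (p : ℂ × ℂ) : ℝ :=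
  exp (-a * ‖p.1‖ ^ 2) * exp (-b * ‖p.2 + s * p.1‖ ^ 2)

lemma shearGaussian_nonneg (a b : ℝ) (s : ℂ) (p : ℂ × ℂ) : 0 ≤ shearGaussian a b s p := by
  unfold shearGaussian
  positivity

section Shear

variable {a b : ℝ} (ha : 0 < a) (hb : 0 < b) (s : ℂ)
include ha hb

lemma integrable_shearGaussian : Integrable (shearGaussian a b s) := by
  rw [Measure.volume_eq_prod]
  exact (integrable_exp_neg_mul_norm_sq_complex ha).mul_prod_add_comp_fst
    (integrable_exp_neg_mul_norm_sq_complex hb) (measurable_const_mul s)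

lemma integral_shearGaussian : ∫ p, shearGaussian a b s p = π / a * (π / b) := by
  unfold shearGaussian
  rw [Measure.volume_eq_prod, integral_mul_prod_add_comp_fst
    (integrable_exp_neg_mul_norm_sq_complex ha) (integrable_exp_neg_mul_norm_sq_complex hb)
    (measurable_const_mul s), integral_exp_neg_mul_norm_sq_complex ha,
    integral_exp_neg_mul_norm_sq_complex hb]

end Shear

lemma sq_norm_mul_add_mul_ge_of_le_norm_div_add {δ : ℝ} (hδ : 0 ≤ δ) {Δa Δb z w : ℂ} (hΔb : Δb ≠ 0)
    (hz : z ≠ 0) (h : δ ≤ ‖w / z + Δa / Δb‖) :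
    ‖Δb‖ ^ 2 * (δ ^ 2 * ‖z‖ ^ 2 + ‖w + Δa / Δb * z‖ ^ 2) ≤ 2 * ‖z * Δa + w * Δb‖ ^ 2 := by
  have hfactor : z * Δa + w * Δb = Δb * (w + Δa / Δb * z) := by field_simp; ring
  have hdist : δ * ‖z‖ ≤ ‖w + Δa / Δb * z‖ := by
    calc δ * ‖z‖ ≤ ‖w / z + Δa / Δb‖ * ‖z‖ := by gcongr
      _ = ‖w + Δa / Δb * z‖ := by rw [← norm_mul, add_mul, div_mul_cancel₀ _ hz]
  rw [hfactor, norm_mul]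
  nlinarith [pow_le_pow_left₀ (by positivity) hdist 2, sq_nonneg ‖Δb‖]

lemma pairwiseError_integrand_le {K : ℝ} (hK : 0 ≤ K + 1) {Δa Δb : ℂ} (hΔb : Δb ≠ 0)
    {δ : ℝ} (hδ : 0 ≤ δ) {ρ : ℝ} (hρ : 0 ≤ ρ) {z w : ℂ} (hz : z ≠ 0)
    (h : δ ≤ ‖w / z + Δa / Δb‖) :
    gaussianQ (√ρ * ‖z * Δa + w * Δb‖ / √2) * ricianDensity K z * ricianDensity K w ≤
      2 * ((K + 1) / π) ^ 2 *
        shearGaussian (ρ * (‖Δb‖ ^ 2 / 16) * δ ^ 2) (ρ * (‖Δb‖ ^ 2 / 16)) (Δa / Δb) (z, w) := by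
  set G := shearGaussian (ρ * (‖Δb‖ ^ 2 / 16) * δ ^ 2) (ρ * (‖Δb‖ ^ 2 / 16)) (Δa / Δb) (z, w)
    with hG_def
  have hQ : gaussianQ (√ρ * ‖z * Δa + w * Δb‖ / √2) ≤ 2 * G := by
    refine (gaussianQ_le_two_mul_exp (by positivity)).trans ?_
    rw [hG_def, shearGaussian, ← exp_add, div_pow, mul_pow, sq_sqrt hρ, sq_sqrt zero_le_two]
    gcongr
    nlinarith [mul_le_mul_of_nonneg_left
      (sq_norm_mul_add_mul_ge_of_le_norm_div_add hδ hΔb hz h) hρ]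
  have hG : 0 ≤ 2 * G := mul_nonneg zero_le_two (shearGaussian_nonneg _ _ _ _)
  calc _ ≤ 2 * G * ((K + 1) / π) * ((K + 1) / π) :=
        mul_le_mul (mul_le_mul hQ (ricianDensity_le hK z) (ricianDensity_nonneg hK z) hG)
          (ricianDensity_le hK w) (ricianDensity_nonneg hK w) (by positivity)
    _ = _ := by ring

theorem adaptive_network_coding_pairwise_error_snr_sq_general
    (K : ℝ) (hK : 0 ≤ K) (Δa Δb : ℂ) (hΔb : Δb ≠ 0)
    (δ : ℝ) (hδ : 0 < δ) :
    ∃ C : ℝ, 0 < C ∧ ∀ ρ : ℝ, 1 ≤ ρ →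
      (∫ p in {p : ℂ × ℂ | p.1 ≠ 0 ∧ δ ≤ ‖p.2 / p.1 + Δa / Δb‖},
          gaussianQ (Real.sqrt ρ * ‖p.1 * Δa + p.2 * Δb‖ / Real.sqrt 2) *
            ricianDensity K p.1 * ricianDensity K p.2) ≤ C / ρ ^ 2 := by
  set S := {p : ℂ × ℂ | p.1 ≠ 0 ∧ δ ≤ ‖p.2 / p.1 + Δa / Δb‖}
  have hS : MeasurableSet S :=
    (measurableSet_singleton 0).compl.preimage measurable_fst |>.inter
      (measurableSet_le measurable_const ((measurable_snd.div measurable_fst).add_const _).norm)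
  have hK' : 0 ≤ K + 1 := by linarith
  set M := 2 * ((K + 1) / π) ^ 2
  set c := ‖Δb‖ ^ 2 / 16
  have hc : 0 < c := by positivity
  refine ⟨M * (π / (c * δ ^ 2) * (π / c)), by positivity, fun ρ hρ => ?_⟩
  have hρc : 0 < ρ * c := by positivity
  have hρcδ : 0 < ρ * c * δ ^ 2 := by positivity
  set G := shearGaussian (ρ * c * δ ^ 2) (ρ * c) (Δa / Δb)
  calc _ ≤ ∫ p in S, M * G p :=
        integral_mono_of_nonneg (.of_forall fun p => mul_nonneg (mul_nonneg (gaussianQ_nonneg _)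
            (ricianDensity_nonneg hK' _)) (ricianDensity_nonneg hK' _))
          ((integrable_shearGaussian hρcδ hρc _).const_mul M).integrableOn
          (ae_restrict_of_forall_mem hS fun p ⟨hz, hfar⟩ =>
            pairwiseError_integrand_le hK' hΔb hδ.le (by positivity) hz hfar)
    _ ≤ ∫ p, M * G p :=
        setIntegral_le_integral ((integrable_shearGaussian hρcδ hρc _).const_mul M)
          (.of_forall fun p => mul_nonneg (by positivity) (shearGaussian_nonneg _ _ _ p))
    _ = M * (π / (ρ * c * δ ^ 2) * (π / (ρ * c))) := by
        rw [integral_const_mul, integral_shearGaussian hρcδ hρc]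
    _ = M * (π / (c * δ ^ 2) * (π / c)) / ρ ^ 2 := by
        field_simp

/-- Theorem 1 of the paper, diversity-order form: with adaptive
network coding, the pairwise error probability associated with a removable singular
fade state `s = −Δa/Δb`, integrated over the region of fade states at distance at
least `δ` from `s`, decreases as `SNR⁻²`. -/
theorem adaptive_network_coding_pairwise_error_snr_sq
    (K : ℝ) (hK : 0 ≤ K) (Δa Δb : ℂ) (hΔa : Δa ≠ 0) (hΔb : Δb ≠ 0)
    (δ : ℝ) (hδ : 0 < δ) :
    ∃ C : ℝ, 0 < C ∧ ∀ ρ : ℝ, 1 ≤ ρ →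
      (∫ p in {p : ℂ × ℂ | p.1 ≠ 0 ∧ δ ≤ ‖p.2 / p.1 + Δa / Δb‖},
          gaussianQ (Real.sqrt ρ * ‖p.1 * Δa + p.2 * Δb‖ / Real.sqrt 2) *
            ricianDensity K p.1 * ricianDensity K p.2) ≤ C / ρ ^ 2 :=
  adaptive_network_coding_pairwise_error_snr_sq_general K hK Δa Δb hΔb δ hδ
end

section
/- Let K ≥ 0 with Rician density f_K(h) = ((K+1)/π) · exp(−(K+1)·|h − √(K/(K+1))|²) on ℂ, let Q(x) = ∫_x^∞ (1/√(2π)) · exp(−u²/2) du be the Gaussian tail function, and let a, b ∈ ℂ with S := |a|² + |b|² > 0. Then for every ρ > 0, ∫_ℂ ∫_ℂ Q(√ρ · |a·h_A + b·h_B| / √2) · f_K(h_A) · f_K(h_B) dh_A dh_B ≤ ((K+1)/(K+1 + ρ·S/4)) · exp(−K·ρ·|a + b|²/(4·(K+1) + ρ·S)). -/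
/-!
For `x ≥ 0` the Chernoff bound `Q(x) ≤ exp(-x²/2)` follows from `u² ≥ x² + (u - x)²` on `u ≥ x`,
so the integrand is dominated by `exp(-(ρ/4)|a h_A + b h_B|²) f_K(h_A) f_K(h_B)`. The Rician
density is the complex Gaussian density with mean `√(K/(K+1))` and variance `1/(K+1)`. Completing
the square, integrating a Gaussian kernel `exp(-t|α h + β|²)` against the complex Gaussian density
with mean `m` and variance `1/c` gives `c/(c + t|α|²)` times the Gaussian kernel
`exp(-t'|α m + β|²)` with `t' = c t/(c + t|α|²)`. Integrating out `h_B` and then `h_A` in this way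
evaluates the dominating integral in closed form, and it is exactly the right-hand side.
-/

open MeasureTheory Set

open Real

/-- The complex Gaussian density with mean `m` and variance `1 / c`. -/
noncomputable def complexGaussianPDF (m : ℂ) (c : ℝ) (h : ℂ) : ℝ :=
  c / π * rexp (-c * ‖h - m‖ ^ 2)

lemma complexGaussianPDF_nonneg {c : ℝ} (hc : 0 ≤ c) (m h : ℂ) :
    0 ≤ complexGaussianPDF m c h := by
  unfold complexGaussianPDF
  positivity

lemma integral_exp_neg_mul_sq_norm_sub {c : ℝ} (hc : 0 < c) (w : ℂ) :
    ∫ h : ℂ, rexp (-c * ‖h - w‖ ^ 2) = π / c := by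
  rw [integral_sub_right_eq_self (fun h => rexp (-c * ‖h‖ ^ 2)) w,
    GaussianFourier.integral_rexp_neg_mul_sq_norm hc, Complex.finrank_real_complex]
  norm_num

lemma mul_sq_norm_sub_add_mul_sq_norm_mul_add {c t : ℝ} {α : ℂ} (hc : 0 < c + t * ‖α‖ ^ 2)
    (m β h : ℂ) :
    c * ‖h - m‖ ^ 2 + t * ‖α * h + β‖ ^ 2 =
      (c + t * ‖α‖ ^ 2) *
          ‖h - (c * m - t * starRingEnd ℂ α * β) / (c + t * ‖α‖ ^ 2 : ℝ)‖ ^ 2 +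
        c * t / (c + t * ‖α‖ ^ 2) * ‖α * m + β‖ ^ 2 := by
  simp only [Complex.sq_norm, Complex.normSq_apply, ← sq] at hc ⊢
  simp only [Complex.sub_re, Complex.sub_im, Complex.add_re, Complex.add_im, Complex.mul_re,
    Complex.mul_im, Complex.div_ofReal_re, Complex.div_ofReal_im, Complex.ofReal_re,
    Complex.ofReal_im, Complex.conj_re, Complex.conj_im, zero_mul, sub_zero, add_zero]
  field_simp
  ring

theorem integral_exp_mul_complexGaussianPDF {c t : ℝ} (hc : 0 < c) (ht : 0 ≤ t) (m α β : ℂ) :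
    ∫ h, rexp (-t * ‖α * h + β‖ ^ 2) * complexGaussianPDF m c h =
      c / (c + t * ‖α‖ ^ 2) * rexp (-(c * t / (c + t * ‖α‖ ^ 2)) * ‖α * m + β‖ ^ 2) := by
  have hD : 0 < c + t * ‖α‖ ^ 2 := by positivity
  have hexp (h : ℂ) : rexp (-t * ‖α * h + β‖ ^ 2) * complexGaussianPDF m c h =
      c / π * rexp (-(c * t / (c + t * ‖α‖ ^ 2)) * ‖α * m + β‖ ^ 2) *
        rexp (-(c + t * ‖α‖ ^ 2) *
          ‖h - (c * m - t * starRingEnd ℂ α * β) / (c + t * ‖α‖ ^ 2 : ℝ)‖ ^ 2) := by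
    have := mul_sq_norm_sub_add_mul_sq_norm_mul_add hD m β h
    rw [complexGaussianPDF, mul_left_comm, ← exp_add, mul_assoc (c / π), ← exp_add]
    congr 2
    linarith
  simp_rw [hexp]
  rw [integral_const_mul, integral_exp_neg_mul_sq_norm_sub hD]
  field_simp

lemma integrable_exp_mul_complexGaussianPDF {c t : ℝ} (hc : 0 < c) (ht : 0 ≤ t) (m α β : ℂ) :
    Integrable fun h => rexp (-t * ‖α * h + β‖ ^ 2) * complexGaussianPDF m c h :=
  .of_integral_ne_zero <| by rw [integral_exp_mul_complexGaussianPDF hc ht]; positivity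

theorem integral_integral_exp_mul_complexGaussianPDF {c t : ℝ} (hc : 0 < c) (ht : 0 ≤ t)
    (m a b : ℂ) :
    ∫ x, ∫ y, rexp (-t * ‖a * x + b * y‖ ^ 2) * complexGaussianPDF m c x *
        complexGaussianPDF m c y =
      c / (c + t * (‖a‖ ^ 2 + ‖b‖ ^ 2)) *
        rexp (-(c * t / (c + t * (‖a‖ ^ 2 + ‖b‖ ^ 2))) * ‖(a + b) * m‖ ^ 2) := by
  have hinner (x : ℂ) :
      ∫ y, rexp (-t * ‖a * x + b * y‖ ^ 2) * complexGaussianPDF m c x * complexGaussianPDF m c y =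
        c / (c + t * ‖b‖ ^ 2) *
          (rexp (-(c * t / (c + t * ‖b‖ ^ 2)) * ‖a * x + b * m‖ ^ 2) *
            complexGaussianPDF m c x) := by
    simp_rw [mul_right_comm _ (complexGaussianPDF m c x), add_comm (a * x)]
    rw [integral_mul_const, integral_exp_mul_complexGaussianPDF hc ht, add_comm (b * m)]
    ring
  simp_rw [hinner]
  rw [integral_const_mul, integral_exp_mul_complexGaussianPDF hc (by positivity), add_mul,
    ← mul_assoc]
  congr 1
  · field_simp
    ring
  · congr 3
    field_simp
    ring

open ProbabilityTheory in
lemma gaussianQ_le_exp_neg_sq_div_two {x : ℝ} (hx : 0 ≤ x) : gaussianQ x ≤ rexp (-x ^ 2 / 2) := by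
  have hpdf (u : ℝ) (hu : x ≤ u) :
      gaussianPDFReal 0 1 u ≤ rexp (-x ^ 2 / 2) * gaussianPDFReal x 1 u := by
    have hsq : -u ^ 2 / 2 ≤ -x ^ 2 / 2 + -(u - x) ^ 2 / 2 := by
      nlinarith [mul_nonneg hx (sub_nonneg.2 hu)]
    simp only [gaussianPDFReal, NNReal.coe_one, mul_one, sub_zero]
    rw [mul_left_comm, ← exp_add]
    gcongr
  calc gaussianQ x = ∫ u in Ioi x, gaussianPDFReal 0 1 u := by
        simp [gaussianQ, gaussianPDFReal]
    _ ≤ ∫ u in Ioi x, rexp (-x ^ 2 / 2) * gaussianPDFReal x 1 u :=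
        setIntegral_mono_on (integrable_gaussianPDFReal 0 1).integrableOn
          ((integrable_gaussianPDFReal x 1).const_mul _).integrableOn measurableSet_Ioi
          fun u hu => hpdf u (le_of_lt hu)
    _ ≤ ∫ u, rexp (-x ^ 2 / 2) * gaussianPDFReal x 1 u :=
        setIntegral_le_integral ((integrable_gaussianPDFReal x 1).const_mul _)
          (.of_forall fun u => mul_nonneg (exp_nonneg _) (gaussianPDFReal_nonneg x 1 u))
    _ = rexp (-x ^ 2 / 2) := by
        rw [integral_const_mul, integral_gaussianPDFReal_eq_one x one_ne_zero, mul_one]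

lemma integral_integral_comp_norm_mul_complexGaussianPDF_le {c t : ℝ} (hc : 0 < c) (ht : 0 ≤ t)
    (m a b : ℂ) {g : ℝ → ℝ} (hg_nonneg : ∀ r, 0 ≤ g r)
    (hg_le : ∀ r, 0 ≤ r → g r ≤ rexp (-t * r ^ 2)) :
    ∫ x, ∫ y, g ‖a * x + b * y‖ * complexGaussianPDF m c x * complexGaussianPDF m c y ≤
      ∫ x, ∫ y, rexp (-t * ‖a * x + b * y‖ ^ 2) * complexGaussianPDF m c x *
        complexGaussianPDF m c y := by
  have hp := complexGaussianPDF_nonneg hc.le m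
  have hnonneg (x y : ℂ) :
      0 ≤ g ‖a * x + b * y‖ * complexGaussianPDF m c x * complexGaussianPDF m c y := by
    have := hg_nonneg ‖a * x + b * y‖; have := hp x; have := hp y
    positivity
  have hle (x y : ℂ) :
      g ‖a * x + b * y‖ * complexGaussianPDF m c x * complexGaussianPDF m c y ≤
        rexp (-t * ‖a * x + b * y‖ ^ 2) * complexGaussianPDF m c x * complexGaussianPDF m c y := by
    have := hp x; have := hp y
    gcongr
    exact hg_le _ (norm_nonneg _)
  have hint_inner (x : ℂ) : Integrable fun y =>
      rexp (-t * ‖a * x + b * y‖ ^ 2) * complexGaussianPDF m c x * complexGaussianPDF m c y :=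
    ((integrable_exp_mul_complexGaussianPDF hc ht m b (a * x)).mul_const
      (complexGaussianPDF m c x)).congr (.of_forall fun y => by dsimp only; rw [add_comm]; ring)
  have hint_outer : Integrable fun x => ∫ y,
      rexp (-t * ‖a * x + b * y‖ ^ 2) * complexGaussianPDF m c x * complexGaussianPDF m c y :=
    .of_integral_ne_zero <| by rw [integral_integral_exp_mul_complexGaussianPDF hc ht]; positivity
  exact integral_mono_of_nonneg (.of_forall fun x => integral_nonneg (hnonneg x)) hint_outer
    (.of_forall fun x => integral_mono_of_nonneg (.of_forall (hnonneg x)) (hint_inner x)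
      (.of_forall (hle x)))

theorem fnc_pairwise_error_upper_bound_general
    (K : ℝ) (hK : 0 ≤ K) (a b : ℂ)
    (ρ : ℝ) (hρ : 0 < ρ) :
    (∫ hA : ℂ, ∫ hB : ℂ,
        gaussianQ (Real.sqrt ρ * ‖a * hA + b * hB‖ / Real.sqrt 2) *
          ricianDensity K hA * ricianDensity K hB) ≤
      ((K + 1) / (K + 1 + ρ * (‖a‖ ^ 2 + ‖b‖ ^ 2) / 4)) *
        Real.exp (-K * ρ * ‖a + b‖ ^ 2 /
          (4 * (K + 1) + ρ * (‖a‖ ^ 2 + ‖b‖ ^ 2))) := by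
  have hK1 : 0 < K + 1 := by linarith
  have hρ4 : 0 ≤ ρ / 4 := by positivity
  have hQ (r : ℝ) (hr : 0 ≤ r) : gaussianQ (√ρ * r / √2) ≤ rexp (-(ρ / 4) * r ^ 2) := by
    convert gaussianQ_le_exp_neg_sq_div_two (by positivity : 0 ≤ √ρ * r / √2) using 2
    rw [div_pow, mul_pow, sq_sqrt hρ.le, sq_sqrt zero_le_two]
    ring
  have hm : ‖((√(K / (K + 1)) : ℝ) : ℂ)‖ ^ 2 = K / (K + 1) := by
    rw [Complex.norm_real, norm_of_nonneg (sqrt_nonneg _), sq_sqrt (by positivity)]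
  have hf : ricianDensity K = complexGaussianPDF (√(K / (K + 1)) : ℝ) (K + 1) := rfl
  rw [hf]
  calc _ ≤ _ := integral_integral_comp_norm_mul_complexGaussianPDF_le hK1 hρ4 _ a b
        (fun _ => gaussianQ_nonneg _) hQ
    _ = _ := integral_integral_exp_mul_complexGaussianPDF hK1 hρ4 _ a b
    _ = _ := by
      rw [norm_mul, mul_pow, hm]
      congr 2 <;> field_simp

/-- finite-SNR pairwise error probability bound, equation (8) of the
paper, from the Chernoff bound `Q(x) ≤ e^{−x²/2}` and the exact Gaussian–Rician
integral: with `S = |a|² + |b|² > 0`, for every `ρ > 0`,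
`∫∫ Q(√ρ|a h_A + b h_B|/√2) f_K(h_A) f_K(h_B)
  ≤ ((K+1)/(K+1+ρS/4)) exp(−Kρ|a+b|²/(4(K+1)+ρS))`. -/
theorem fnc_pairwise_error_upper_bound
    (K : ℝ) (hK : 0 ≤ K) (a b : ℂ)
    (hS : 0 < ‖a‖ ^ 2 + ‖b‖ ^ 2)
    (ρ : ℝ) (hρ : 0 < ρ) :
    (∫ hA : ℂ, ∫ hB : ℂ,
        gaussianQ (Real.sqrt ρ * ‖a * hA + b * hB‖ / Real.sqrt 2) *
          ricianDensity K hA * ricianDensity K hB) ≤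
      ((K + 1) / (K + 1 + ρ * (‖a‖ ^ 2 + ‖b‖ ^ 2) / 4)) *
        Real.exp (-K * ρ * ‖a + b‖ ^ 2 /
          (4 * (K + 1) + ρ * (‖a‖ ^ 2 + ‖b‖ ^ 2))) :=
  fnc_pairwise_error_upper_bound_general K hK a b ρ hρ
end
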